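/- If S is an 𝓗-complete Hausdorff topological semilattice containing the discrete semilattice (ℕ, min) as a dense subsemilattice, then the complement S \ ℕ is a singleton {a}, and a satisfies a·a = a and a·n = n for all n ∈ ℕ (i.e., a is the top element of S). -/

import Mathlib

open Topology Set

/-- A filter is free if the intersection of all its members is empty. -/
def FreeF (F : Filter ℕ) : Prop := ⋂₀ F.sets = ∅

/-- The topology on ℕ_ℱ = ℕ ∪ {ℱ} (modelled as `Option ℕ`, with `none` the point ℱ):
all points of ℕ are isolated, and the sets F ∪ {ℱ}, F ∈ ℱ, form a neighbourhood base at ℱ. -/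
def nfTop (F : Filter ℕ) : TopologicalSpace (Option ℕ) where
  IsOpen U := none ∈ U → {n : ℕ | some n ∈ U} ∈ F
  isOpen_univ := fun _ => by simp
  isOpen_inter := fun U V hU hV h => Filter.inter_mem (hU h.1) (hV h.2)
  isOpen_sUnion := fun S hS h => by
    obtain ⟨U, hUS, hnU⟩ := h
    exact Filter.mem_of_superset (hS U hUS hnU) fun n hn => ⟨U, hUS, hn⟩

/-- min on ℕ extended to ℕ_ℱ by min(n,ℱ) = n, min(ℱ,ℱ) = ℱ. -/
def minOp : Option ℕ → Option ℕ → Option ℕ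
  | none, y => y
  | some a, none => some a
  | some a, some b => some (min a b)

/-- max on ℕ extended to ℕ_ℱ by max(n,ℱ) = ℱ = max(ℱ,ℱ). -/
def maxOp : Option ℕ → Option ℕ → Option ℕ
  | none, _ => none
  | _, none => none
  | some a, some b => some (max a b)

/-- `X` with operation `op` is a (Hausdorff) topological semilattice. -/
structure IsTopSemilattice (X : Type*) [TopologicalSpace X] (op : X → X → X) : Prop where
  t2 : T2Space X
  comm : ∀ a b, op a b = op b a
  idem : ∀ a, op a a = a
  assoc : ∀ a b c, op (op a b) c = op a (op b c)
  cont : Continuous fun p : X × X => op p.1 p.2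

/-- 𝓗-completeness: the image under any topological embedding which is a semilattice
homomorphism into a Hausdorff topological semilattice is closed. -/
def HComplete (X : Type*) [TopologicalSpace X] (op : X → X → X) : Prop :=
  ∀ (Y : Type*) [TopologicalSpace Y] (opY : Y → Y → Y), IsTopSemilattice Y opY →
    ∀ f : X → Y, Topology.IsEmbedding f →
      (∀ a b, f (op a b) = opY (f a) (f b)) → IsClosed (Set.range f)

/-- 𝓐𝓗-completeness: the image under any continuous semilattice homomorphism
into a Hausdorff topological semilattice is closed. -/
def AHComplete (X : Type*) [TopologicalSpace X] (op : X → X → X) : Prop :=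
  ∀ (Y : Type*) [TopologicalSpace Y] (opY : Y → Y → Y), IsTopSemilattice Y opY →
    ∀ f : X → Y, Continuous f →
      (∀ a b, f (op a b) = opY (f a) (f b)) → IsClosed (Set.range f)

/-! A point `b` of `S` outside `ℕ` lies in the closure of every tail `{n, n+1, …}`, since the
finite head `{0, …, n-1}` is closed; as `x ↦ x·n` sends that tail to `n`, continuity gives
`b·n = n`, and by density `b` is a unit for all of `S`. Two units coincide, so `S \ ℕ` has at
most one point. It has at least one: otherwise `S` is the discrete semilattice `(ℕ, min)`, which
is not 𝓗-complete because it sits as a non-closed subsemilattice in `(ℕ∞, min)`. -/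

open Filter

universe u v w

theorem IsTopSemilattice.min_of_orderClosedTopology (X : Type u) [LinearOrder X]
    [TopologicalSpace X] [OrderClosedTopology X] : IsTopSemilattice X min where
  t2 := inferInstance
  comm := min_comm
  idem := min_self
  assoc := min_assoc
  cont := continuous_min

theorem IsTopSemilattice.ulift {X : Type u} [TopologicalSpace X] {op : X → X → X}
    (h : IsTopSemilattice X op) :
    IsTopSemilattice (ULift.{v} X) fun x y => ULift.up (op x.down y.down) where
  t2 := haveI := h.t2; inferInstance
  comm a b := congrArg ULift.up (h.comm a.down b.down)
  idem a := congrArg ULift.up (h.idem a.down)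
  assoc a b c := congrArg ULift.up (h.assoc a.down b.down c.down)
  cont := continuous_uliftUp.comp <| h.cont.comp <|
    (continuous_uliftDown.comp continuous_fst).prodMk (continuous_uliftDown.comp continuous_snd)

theorem HComplete.of_homeomorph {X : Type u} {Y : Type v} [TopologicalSpace X]
    [TopologicalSpace Y] {opX : X → X → X} {opY : Y → Y → Y} (h : HComplete.{v, w} Y opY)
    (e : X ≃ₜ Y) (he : ∀ a b, e (opX a b) = opY (e a) (e b)) : HComplete.{u, w} X opX := by
  intro Z _ opZ hZ f hf hfop
  rw [← e.symm.surjective.range_comp f]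
  refine h Z opZ hZ (f ∘ e.symm) (hf.comp e.symm.isEmbedding) fun a b => ?_
  obtain ⟨a, rfl⟩ := e.surjective a
  obtain ⟨b, rfl⟩ := e.surjective b
  simp only [Function.comp_apply, ← he, e.symm_apply_apply, hfop]

theorem not_hComplete_nat_min : ¬ HComplete.{0, u} ℕ min := by
  intro h
  have hclosed := h (ULift ℕ∞) _ (IsTopSemilattice.min_of_orderClosedTopology ℕ∞).ulift
    (ULift.up ∘ Nat.cast) (Homeomorph.ulift.symm.isEmbedding.comp ENat.isEmbedding_natCast)
    fun m n => congrArg ULift.up (Nat.mono_cast.map_min)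
  obtain ⟨n, hn⟩ := hclosed.mem_of_tendsto
    ((continuous_uliftUp.tendsto ⊤).comp ENat.tendsto_natCast_nhds_top)
    (Eventually.of_forall fun n => mem_range_self n)
  exact ENat.natCast_ne_top n (congrArg ULift.down hn)

theorem mem_closure_image_Ici_of_notMem_range {S : Type u} [TopologicalSpace S] [T1Space S]
    {ι : ℕ → S} (hdense : DenseRange ι) {b : S} (hb : b ∉ range ι) (n : ℕ) :
    b ∈ closure (ι '' Ici n) := by
  have hb' : b ∈ closure (ι '' Iio n ∪ ι '' Ici n) := by
    rw [← image_union, Iio_union_Ici, image_univ, hdense.closure_range]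
    exact mem_univ b
  rw [closure_union, ((finite_Iio n).image ι).isClosed.closure_eq] at hb'
  exact hb'.resolve_left fun ⟨m, _, hm⟩ => hb ⟨m, hm⟩

theorem IsTopSemilattice.op_eq_right_of_notMem_range {S : Type u} [TopologicalSpace S]
    {op : S → S → S} (hS : IsTopSemilattice S op) {ι : ℕ → S}
    (hhom : ∀ m n : ℕ, ι (min m n) = op (ι m) (ι n)) (hdense : DenseRange ι) {b : S}
    (hb : b ∉ range ι) (x : S) : op b x = x := by
  have := hS.t2
  have hcont : Continuous (op b) := hS.cont.comp (continuous_const.prodMk continuous_id)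
  have hunit : ∀ n, op b (ι n) = ι n := by
    intro n
    have htail : MapsTo (fun y => op y (ι n)) (ι '' Ici n) {ι n} := by
      rintro _ ⟨m, hm, rfl⟩
      show op (ι m) (ι n) = ι n
      rw [← hhom, min_eq_right hm]
    have hmaps := htail.closure (hS.cont.comp (continuous_id.prodMk continuous_const))
    rw [closure_singleton] at hmaps
    exact hmaps (mem_closure_image_Ici_of_notMem_range hdense hb n)
  exact congrFun (hdense.equalizer hcont continuous_id (funext hunit)) x

/-- if S is an 𝓗-complete Hausdorff topological semilattice containing the
discrete semilattice (ℕ, min) as a dense subsemilattice, then S \ ℕ is a singleton {a}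
with a·a = a and a·n = n for all n ∈ ℕ. -/
theorem hCompletion_min_complement_singleton (S : Type) [TopologicalSpace S] (op : S → S → S)
    (hS : IsTopSemilattice S op) (hHC : HComplete S op)
    (ι : ℕ → S) (hemb : Topology.IsEmbedding ι)
    (hhom : ∀ m n : ℕ, ι (min m n) = op (ι m) (ι n))
    (hdense : DenseRange ι) :
    ∃ a : S, (Set.range ι)ᶜ = {a} ∧ op a a = a ∧ ∀ n : ℕ, op a (ι n) = ι n := by
  obtain ⟨a, ha⟩ : ∃ a, a ∉ range ι := by
    by_contra! hsurj
    exact not_hComplete_nat_min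
      (hHC.of_homeomorph (hemb.toHomeomorphOfSurjective fun s => hsurj s) hhom)
  have hunit := fun {b} (hb : b ∉ range ι) => hS.op_eq_right_of_notMem_range hhom hdense hb
  refine ⟨a, eq_singleton_iff_unique_mem.2 ⟨ha, fun b hb => ?_⟩, hunit ha a,
    fun n => hunit ha (ι n)⟩
  calc b = op a b := (hunit ha b).symm
    _ = op b a := hS.comm a b
    _ = a := hunit hb a
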